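/- Suppose N·p is an integer. Then the mean absolute deviation of the binomial distribution from its mean satisfies Σ_{i=0}^N |i − N·p|·Bin(N, p)(i) ≤ √(2·N·p·(1 − p)/π) ≤ √(N/(2π)). -/

import Mathlib

open Finset

/-- The probability mass function of the binomial distribution with parameters
`N` and `p`: `Bin(N, p)(i) = C(N, i) · p^i · (1 - p)^(N - i)`. -/
noncomputable def binPMF (N : ℕ) (p : ℝ) (i : ℕ) : ℝ :=
  (N.choose i : ℝ) * p ^ i * (1 - p) ^ (N - i)

/-!
Write `N = n + 1` and `q = 1 - p`. The centred binomial weights telescope,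
`(j + 1 - Np) Bin(N, p)(j + 1) = Npq (Bin(n, p)(j) - Bin(n, p)(j + 1))`, so the centred sum vanishes
and its part above `m = Np` is `Npq Bin(n, p)(m)`; since `|x| = 2x⁺ - x` this gives De Moivre's
formula `Σ |i - Np| Bin(N, p)(i) = 2Npq Bin(n, p)(m)`. When `Np = m` is an integer,
`Bin(n, p)(m) = Bin(N, p)(m)`, and writing the factorials in `C(N, m)` through the Stirling sequence
`k! / (√(2k) (k/e)^k)`, which decreases to `√π`, bounds this by `1 / √(2πNpq)`.
The second inequality is `4pq ≤ 1`.
-/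

open Real Nat Stirling

theorem Stirling.stirlingSeq_le_of_le {m n : ℕ} (hm : m ≠ 0) (hmn : m ≤ n) :
    stirlingSeq n ≤ stirlingSeq m := by
  obtain ⟨m, rfl⟩ := exists_eq_succ_of_ne_zero hm
  obtain ⟨n, rfl⟩ := exists_eq_succ_of_ne_zero (by omega : n ≠ 0)
  exact stirlingSeq'_antitone (succ_le_succ_iff.mp hmn)

theorem Stirling.factorial_eq_stirlingSeq_mul {n : ℕ} (hn : n ≠ 0) :
    (n ! : ℝ) = stirlingSeq n * √(2 * n) * (n / exp 1) ^ n := by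
  rw [stirlingSeq]
  field_simp

theorem add_choose_mul_pow_mul_pow_le {m k : ℕ} (hm : m ≠ 0) (hk : k ≠ 0) :
    ((m + k).choose m : ℝ) * m ^ m * k ^ k ≤
      √((m + k) / (2 * π * m * k)) * (m + k) ^ (m + k) := by
  have hfac : ((m + k).choose m : ℝ) * m ! * k ! = (m + k)! := by
    have h := add_choose_mul_factorial_mul_factorial k m
    rw [add_comm k m, mul_right_comm] at h
    exact_mod_cast h
  rw [factorial_eq_stirlingSeq_mul hm, factorial_eq_stirlingSeq_mul hk,
    factorial_eq_stirlingSeq_mul (by omega : m + k ≠ 0)] at hfac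
  set x := ((m + k).choose m : ℝ) * m ^ m * k ^ k
  have hstirling : x * (stirlingSeq m * stirlingSeq k * √(2 * m) * √(2 * k)) =
      stirlingSeq (m + k) * √(2 * (m + k)) * (m + k) ^ (m + k) := by
    push_cast at hfac
    rw [div_pow, div_pow, div_pow, pow_add (exp 1)] at hfac
    field_simp at hfac
    linear_combination hfac
  have hsm : 0 < stirlingSeq m := (sqrt_pos.2 pi_pos).trans_le (sqrt_pi_le_stirlingSeq hm)
  have hsk : √π ≤ stirlingSeq k := sqrt_pi_le_stirlingSeq hk
  have hsN : stirlingSeq (m + k) ≤ stirlingSeq m := stirlingSeq_le_of_le hm (le_add_right m k)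
  have hbound : x * (√π * √(2 * m) * √(2 * k)) ≤ √(2 * (m + k)) * (m + k) ^ (m + k) := by
    refine le_of_mul_le_mul_left ?_ hsm
    calc stirlingSeq m * (x * (√π * √(2 * m) * √(2 * k)))
        = x * (stirlingSeq m * √π * √(2 * m) * √(2 * k)) := by ring
      _ ≤ x * (stirlingSeq m * stirlingSeq k * √(2 * m) * √(2 * k)) := by gcongr
      _ ≤ stirlingSeq m * (√(2 * (m + k)) * (m + k) ^ (m + k)) := by
          rw [hstirling, mul_assoc]
          gcongr
  have hsqrt : √((m + k) / (2 * π * m * k)) * (√π * √(2 * m) * √(2 * k)) = √(2 * (m + k)) := by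
    rw [← sqrt_mul pi_pos.le, ← sqrt_mul (by positivity), ← sqrt_mul (by positivity)]
    congr 1
    field_simp
  refine le_of_mul_le_mul_right ?_ (by positivity : 0 < √π * √(2 * m) * √(2 * k))
  calc x * (√π * √(2 * m) * √(2 * k)) ≤ √(2 * (m + k)) * (m + k) ^ (m + k) := hbound
    _ = _ := by rw [← hsqrt]; ring

theorem binPMF_le_one_div_sqrt {N m : ℕ} {p : ℝ} (hN : 0 < N) (hp0 : 0 < p) (hp1 : p < 1)
    (hp : (m : ℝ) = N * p) : binPMF N p m ≤ 1 / √(2 * π * (N * p * (1 - p))) := by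
  have hm : m ≠ 0 := by
    have : (0 : ℝ) < m := by rw [hp]; positivity
    exact_mod_cast this.ne'
  have hmN : m < N := by
    have : (m : ℝ) < N := by rw [hp]; exact mul_lt_of_lt_one_right (by positivity) hp1
    exact_mod_cast this
  obtain ⟨k, rfl⟩ : ∃ k, N = m + k := ⟨N - m, by omega⟩
  have hk : k ≠ 0 := by omega
  push_cast at hp ⊢
  have hmk : (0 : ℝ) < m + k := by positivity
  have hp' : p = m / (m + k) := (eq_div_iff hmk.ne').mpr (by linarith)
  have hq : 1 - p = k / (m + k) := by rw [hp']; field_simp; ring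
  calc binPMF (m + k) p m = ((m + k).choose m : ℝ) * m ^ m * k ^ k / (m + k) ^ (m + k) := by
        rw [binPMF, Nat.add_sub_cancel_left, hq, hp', div_pow, div_pow, pow_add]
        ring
    _ ≤ √((m + k) / (2 * π * m * k)) :=
        div_le_of_le_mul₀ (by positivity) (by positivity) (add_choose_mul_pow_mul_pow_le hm hk)
    _ = 1 / √(2 * π * ((m + k) * p * (1 - p))) := by
        rw [one_div, ← sqrt_inv, hq, hp']
        congr 1
        field_simp

theorem binPMF_eq_zero_of_lt {n i : ℕ} (p : ℝ) (h : n < i) : binPMF n p i = 0 := by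
  simp [binPMF, Nat.choose_eq_zero_of_lt h]

theorem sub_mul_binPMF_succ_succ (n j : ℕ) (p : ℝ) :
    ((j + 1 : ℝ) - (n + 1) * p) * binPMF (n + 1) p (j + 1) =
      (n + 1) * p * (1 - p) * (binPMF n p j - binPMF n p (j + 1)) := by
  have hpascal : ((n + 1).choose (j + 1) : ℝ) = n.choose j + n.choose (j + 1) := by
    exact_mod_cast choose_succ_succ' n j
  have habsorb : (j + 1 : ℝ) * (n + 1).choose (j + 1) = (n + 1) * n.choose j := by
    exact_mod_cast (mul_comm _ _).trans (add_one_mul_choose_eq n j).symm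
  have hq : (n.choose (j + 1) : ℝ) * (1 - p) ^ (n - j) =
      (1 - p) * (n.choose (j + 1) * (1 - p) ^ (n - (j + 1))) := by
    rcases lt_or_ge j n with h | h
    · rw [show n - j = n - (j + 1) + 1 by omega, pow_succ]
      ring
    · simp [choose_eq_zero_of_lt (show n < j + 1 by omega)]
  rw [binPMF, binPMF, binPMF, Nat.add_sub_add_right]
  linear_combination p ^ (j + 1) * (1 - p) ^ (n - j) * habsorb
    - (n + 1) * p * p ^ (j + 1) * (1 - p) ^ (n - j) * hpascal - (n + 1) * p * p ^ (j + 1) * hq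

theorem sum_Ico_sub_mul_binPMF {n a : ℕ} (p : ℝ) (ha : a ≤ n + 1) :
    ∑ i ∈ Ico (a + 1) (n + 2), ((i : ℝ) - (n + 1) * p) * binPMF (n + 1) p i =
      (n + 1) * p * (1 - p) * binPMF n p a := by
  have hstep (k : ℕ) : (((a + 1 + k : ℕ) : ℝ) - (n + 1) * p) * binPMF (n + 1) p (a + 1 + k) =
      (n + 1) * p * (1 - p) * (binPMF n p (a + k) - binPMF n p (a + (k + 1))) := by
    have h := sub_mul_binPMF_succ_succ n (a + k) p
    rw [add_assoc a k 1] at h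
    rw [show a + 1 + k = a + (k + 1) by ring]
    push_cast at h ⊢
    linear_combination h
  rw [sum_Ico_eq_sum_range, show n + 2 - (a + 1) = n + 1 - a by omega]
  simp_rw [hstep]
  rw [← mul_sum, sum_range_sub' (fun k => binPMF n p (a + k)), add_zero,
    show a + (n + 1 - a) = n + 1 by omega, binPMF_eq_zero_of_lt p n.lt_succ_self, sub_zero]

theorem sum_sub_mul_binPMF (n : ℕ) (p : ℝ) :
    ∑ i ∈ range (n + 2), ((i : ℝ) - (n + 1) * p) * binPMF (n + 1) p i = 0 := by
  rw [← sum_range_add_sum_Ico _ (by omega : 1 ≤ n + 2), sum_range_one,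
    sum_Ico_sub_mul_binPMF p (Nat.zero_le _)]
  simp [binPMF]
  ring

theorem sum_posPart_sub_mul_binPMF {n m : ℕ} {p : ℝ} (hmn : m ≤ n + 1)
    (hlo : (m : ℝ) ≤ (n + 1) * p) (hhi : (n + 1) * p ≤ m + 1) :
    ∑ i ∈ range (n + 2), ((i : ℝ) - (n + 1) * p)⁺ * binPMF (n + 1) p i =
      (n + 1) * p * (1 - p) * binPMF n p m := by
  rw [← sum_range_add_sum_Ico _ (by omega : m + 1 ≤ n + 2), ← sum_Ico_sub_mul_binPMF p hmn]
  have hbelow : ∀ i ∈ range (m + 1), ((i : ℝ) - (n + 1) * p)⁺ * binPMF (n + 1) p i = 0 := by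
    intro i hi
    have : (i : ℝ) ≤ m := by exact_mod_cast mem_range_succ_iff.1 hi
    rw [posPart_eq_zero.2 (by linarith), zero_mul]
  rw [sum_eq_zero hbelow, zero_add]
  refine sum_congr rfl fun i hi => ?_
  have : (m : ℝ) + 1 ≤ i := by exact_mod_cast (mem_Ico.1 hi).1
  rw [posPart_eq_self.2 (by linarith)]

theorem sum_abs_sub_mul_binPMF {n m : ℕ} {p : ℝ} (hmn : m ≤ n + 1)
    (hlo : (m : ℝ) ≤ (n + 1) * p) (hhi : (n + 1) * p ≤ m + 1) :
    ∑ i ∈ range (n + 2), |(i : ℝ) - (n + 1) * p| * binPMF (n + 1) p i =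
      2 * ((n + 1) * p * (1 - p) * binPMF n p m) := by
  have habs (x y : ℝ) : |x| * y = 2 * (x⁺ * y) - x * y := by
    have h := abs_add_eq_two_nsmul_posPart x
    rw [two_nsmul] at h
    linear_combination y * h
  simp only [habs]
  rw [sum_sub_distrib, ← mul_sum, sum_posPart_sub_mul_binPMF hmn hlo hhi, sum_sub_mul_binPMF,
    sub_zero]

theorem succ_sub_mul_binPMF_succ {n m : ℕ} (p : ℝ) (hmn : m ≤ n) :
    ((n + 1 : ℝ) - m) * binPMF (n + 1) p m = (n + 1) * (1 - p) * binPMF n p m := by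
  have habsorb : (n.choose m : ℝ) * (n + 1) = (n + 1).choose m * ((n + 1 : ℝ) - m) := by
    have h := choose_mul_succ_eq n m
    rw [← Nat.cast_inj (R := ℝ)] at h
    push_cast [Nat.cast_sub (show m ≤ n + 1 by omega)] at h
    exact h
  rw [binPMF, binPMF, show n + 1 - m = n - m + 1 by omega, pow_succ]
  linear_combination -(1 - p) * p ^ m * (1 - p) ^ (n - m) * habsorb

theorem binPMF_succ_of_natCast_eq_mul {n m : ℕ} {p : ℝ} (hp : p < 1)
    (hm : (m : ℝ) = (n + 1) * p) : binPMF (n + 1) p m = binPMF n p m := by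
  have hmn : m ≤ n := by
    have : (m : ℝ) < n + 1 := by rw [hm]; exact mul_lt_of_lt_one_right (by positivity) hp
    have : m < n + 1 := by exact_mod_cast this
    omega
  have h := succ_sub_mul_binPMF_succ p hmn
  rw [hm, show (n + 1 : ℝ) - (n + 1) * p = (n + 1) * (1 - p) by ring] at h
  have hq : 0 < 1 - p := by linarith
  exact mul_left_cancel₀ (by positivity) h

theorem two_mul_mul_one_div_sqrt_two_pi_mul {x : ℝ} (hx : 0 < x) :
    2 * (x * (1 / √(2 * π * x))) = √(2 * x / π) := by
  rw [← sqrt_sq (by positivity : 0 ≤ 2 * (x * (1 / √(2 * π * x))))]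
  congr 1
  rw [mul_pow, mul_pow, div_pow, sq_sqrt (by positivity)]
  field_simp

/-- If `N·p` is an integer, then the mean absolute deviation of the binomial
distribution from its mean satisfies
`Σ_{i=0}^N |i - N·p|·Bin(N,p)(i) ≤ √(2·N·p·(1-p)/π) ≤ √(N/(2π))`. -/
theorem binomial_mad_le (N : ℕ) (hN : 0 < N) (p : ℝ) (hp0 : 0 ≤ p) (hp1 : p ≤ 1)
    (m : ℕ) (hm : (m : ℝ) = (N : ℝ) * p) :
    (∑ i ∈ Finset.range (N + 1), |(i : ℝ) - (N : ℝ) * p| * binPMF N p i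
        ≤ Real.sqrt (2 * (N : ℝ) * p * (1 - p) / Real.pi)) ∧
      Real.sqrt (2 * (N : ℝ) * p * (1 - p) / Real.pi)
        ≤ Real.sqrt ((N : ℝ) / (2 * Real.pi)) := by
  obtain ⟨n, rfl⟩ := exists_eq_add_one.mpr hN
  push_cast at hm ⊢
  have hmn : m ≤ n + 1 := by
    exact_mod_cast hm.trans_le (mul_le_of_le_one_right (by positivity) hp1)
  refine ⟨?_, sqrt_le_sqrt ?_⟩
  · rw [sum_abs_sub_mul_binPMF hmn hm.le (by linarith)]
    rcases hp0.eq_or_lt with rfl | hp0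
    · simp
    rcases hp1.eq_or_lt with rfl | hp1
    · simp
    have hσ : 0 < (n + 1) * p * (1 - p) := by
      have : 0 < 1 - p := by linarith
      positivity
    calc 2 * ((n + 1) * p * (1 - p) * binPMF n p m)
        ≤ 2 * ((n + 1) * p * (1 - p) * (1 / √(2 * π * ((n + 1) * p * (1 - p))))) := by
          rw [← binPMF_succ_of_natCast_eq_mul hp1 hm]
          gcongr
          exact_mod_cast binPMF_le_one_div_sqrt n.succ_pos hp0 hp1 (by push_cast; exact hm)
      _ = √(2 * ((n + 1) * p * (1 - p)) / π) := two_mul_mul_one_div_sqrt_two_pi_mul hσ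
      _ = √(2 * (n + 1) * p * (1 - p) / π) := by ring_nf
  · rw [div_le_div_iff₀ pi_pos (by positivity)]
    nlinarith [mul_nonneg (by positivity : (0 : ℝ) ≤ (n + 1) * π) (sq_nonneg (2 * p - 1))]
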